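/- Let P^n be a simple n-polytope with m facets. For any vertex v, pick one facet F_v containing v, and let F_1,…,F_{m-n} be the facets not containing v. Then the indicator vectors ξ_{F_v}, ξ_{F_1},…,ξ_{F_{m-n}} are linearly independent in F_2^{V(P)}; in particular dim B_1(P) ≥ m − n + 1. -/

import Mathlib

/-- An abstract (combinatorial) simple `n`-polytope, recorded by its vertex–facet
incidences: each facet is given by its vertex set. Every vertex lies on exactly `n`
facets, whose intersection is that vertex alone; codimension-`(n-1)` faces (edges)
have exactly two vertices; and the 1-skeleton (graph of vertices and edges) is
connected. -/
structure SimplePolytope (n : ℕ) (V : Type*) [Fintype V] [DecidableEq V] where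
  facets : Finset (Finset V)
  facet_nonempty : ∀ F ∈ facets, F.Nonempty
  vertex_facets_card : ∀ v : V, (facets.filter (fun F => v ∈ F)).card = n
  vertex_inf : ∀ v : V, (facets.filter (fun F => v ∈ F)).inf id = {v}
  edge_card : ∀ S ⊆ facets, S.card = n - 1 → (S.inf id).Nonempty → (S.inf id).card = 2
  connected : (SimpleGraph.fromRel (fun v w : V =>
      ∃ S ⊆ facets, S.card = n - 1 ∧ S.inf id = {v, w})).Connected

namespace SimplePolytope

variable {n : ℕ} {V : Type*} [Fintype V] [DecidableEq V]

/-- `f` is a (nonempty) face of codimension `k`: the intersection of `k` distinct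
facets (for `k = 0` the whole vertex set). -/
def IsFace (P : SimplePolytope n V) (k : ℕ) (f : Finset V) : Prop :=
  f.Nonempty ∧ ∃ S ⊆ P.facets, S.card = k ∧ f = S.inf id

/-- The indicator vector `ξ_f ∈ 𝔽₂^V` of a vertex set `f`. -/
def ind (f : Finset V) : V → ZMod 2 := fun v => if v ∈ f then 1 else 0

/-- The codimension-`k` face code `𝔅_k(P)`: the span of the indicator vectors of the
codimension-`k` faces. -/
def faceCode (P : SimplePolytope n V) (k : ℕ) : Submodule (ZMod 2) (V → ZMod 2) :=
  Submodule.span (ZMod 2) { x | ∃ f, P.IsFace k f ∧ x = ind f }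

/-- A proper coloring of the facets: intersecting facets receive distinct colors. -/
def IsProperColoring (P : SimplePolytope n V) (c : Finset V → Fin n) : Prop :=
  ∀ F ∈ P.facets, ∀ G ∈ P.facets, F ≠ G → (F ∩ G).Nonempty → c F ≠ c G

/-- `P` is `n`-colorable. -/
def Colorable (P : SimplePolytope n V) : Prop := ∃ c, P.IsProperColoring c

end SimplePolytope

/-!
Suppose a nonempty set `S` of facets avoiding `v` had indicator vectors summing to zero.
Walking in the connected 1-skeleton from a vertex of `⋃ S` to `v` crosses an edge `wu` with
`w ∈ ⋃ S` and `u ∉ ⋃ S`. The edge is cut out by `n - 1` of the `n` facets at `w`, and all of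
them contain `u`, so exactly one facet of `S` contains `w`: the sum is `1` at `w`.
The indicator of a facet through `v` is independent of the others since only it is nonzero at `v`.
-/

theorem linearIndependent_zmod_two_iff {ι M : Type*} [AddCommGroup M] [Module (ZMod 2) M]
    {f : ι → M} : LinearIndependent (ZMod 2) f ↔ ∀ s : Finset ι, ∑ i ∈ s, f i = 0 → s = ∅ := by
  classical
  rw [linearIndependent_iff']
  constructor
  · intro h s hs
    by_contra hne
    obtain ⟨i, hi⟩ := Finset.nonempty_iff_ne_empty.2 hne
    exact one_ne_zero (h s 1 (by simpa using hs) i hi)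
  · intro h s g hg i hi
    have hsupp : ∑ j ∈ s.filter (g · ≠ 0), f j = 0 := by
      rw [← hg, Finset.sum_filter]
      refine Finset.sum_congr rfl fun j _ => ?_
      rcases (show ∀ a : ZMod 2, a = 0 ∨ a = 1 by decide) (g j) with hgj | hgj <;> simp [hgj]
    by_contra hgi
    have := h _ hsupp
    exact Finset.notMem_empty i (this ▸ Finset.mem_filter.2 ⟨hi, hgi⟩)

theorem SimpleGraph.Connected.exists_adj_of_mem_of_notMem {V : Type*} {G : SimpleGraph V}
    (hG : G.Connected) {s : Set V} {u v : V} (hu : u ∈ s) (hv : v ∉ s) :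
    ∃ x ∈ s, ∃ y ∉ s, G.Adj x y := by
  obtain ⟨p⟩ := hG.preconnected u v
  obtain ⟨d, -, hd, hd'⟩ := p.exists_boundary_dart s hu hv
  exact ⟨d.fst, hd, d.snd, hd', d.adj⟩

namespace SimplePolytope

theorem sum_ind_apply {V : Type*} [DecidableEq V] (S : Finset (Finset V)) (w : V) :
    ∑ F ∈ S, ind F w = (S.filter (w ∈ ·)).card := by
  simp [ind, Finset.sum_boole]

variable {n : ℕ} {V : Type*} [Fintype V] [DecidableEq V] (P : SimplePolytope n V)

theorem ind_mem_faceCode_one {F : Finset V} (hF : F ∈ P.facets) : ind F ∈ P.faceCode 1 :=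
  Submodule.subset_span ⟨F, ⟨P.facet_nonempty F hF, {F}, Finset.singleton_subset_iff.2 hF,
    Finset.card_singleton F, (Finset.inf_singleton (f := id)).symm⟩, rfl⟩

def skeleton : SimpleGraph V :=
  SimpleGraph.fromRel fun v w => ∃ S ⊆ P.facets, S.card = n - 1 ∧ S.inf id = {v, w}

theorem exists_edge_of_adj {w u : V} (h : P.skeleton.Adj w u) :
    ∃ E ⊆ P.facets, E.card = n - 1 ∧ E.inf id = {w, u} := by
  rcases (SimpleGraph.fromRel_adj _ _ _).1 h |>.2 with hwu | ⟨E, hE, hcard, hinf⟩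
  · exact hwu
  · exact ⟨E, hE, hcard, hinf.trans (Finset.pair_comm u w)⟩

theorem card_filter_mem_and_notMem_le_one {w u : V} (h : P.skeleton.Adj w u) :
    (P.facets.filter fun F => w ∈ F ∧ u ∉ F).card ≤ 1 := by
  obtain ⟨E, hE, hcard, hinf⟩ := P.exists_edge_of_adj h
  have hmem : ∀ F ∈ E, w ∈ F ∧ u ∈ F := fun F hF =>
    have hle : E.inf id ⊆ F := Finset.inf_le (f := id) hF
    ⟨hle (by simp [hinf]), hle (by simp [hinf])⟩
  have hEw : E ⊆ P.facets.filter (w ∈ ·) := fun F hF =>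
    Finset.mem_filter.2 ⟨hE hF, (hmem F hF).1⟩
  have hsub : (P.facets.filter fun F => w ∈ F ∧ u ∉ F) ⊆ P.facets.filter (w ∈ ·) \ E :=
    fun F hF => by
      simp only [Finset.mem_filter] at hF
      exact Finset.mem_sdiff.2 ⟨Finset.mem_filter.2 ⟨hF.1, hF.2.1⟩,
        fun hFE => hF.2.2 (hmem F hFE).2⟩
  calc _ ≤ (P.facets.filter (w ∈ ·) \ E).card := Finset.card_le_card hsub
    _ = n - (n - 1) := by rw [Finset.card_sdiff_of_subset hEw, P.vertex_facets_card, hcard]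
    _ ≤ 1 := by omega

theorem exists_card_filter_mem_eq_one {S : Finset (Finset V)} (hS : S ⊆ P.facets)
    (hne : S.Nonempty) {v : V} (hv : ∀ F ∈ S, v ∉ F) :
    ∃ w, (S.filter (w ∈ ·)).card = 1 := by
  obtain ⟨F₀, hF₀⟩ := hne
  obtain ⟨w₀, hw₀⟩ := P.facet_nonempty F₀ (hS hF₀)
  obtain ⟨w, ⟨F, hF, hwF⟩, u, hu, hwu⟩ :=
    (show P.skeleton.Connected from P.connected).exists_adj_of_mem_of_notMem
      (s := {x | ∃ F ∈ S, x ∈ F}) ⟨F₀, hF₀, hw₀⟩ (fun ⟨F, hF, hvF⟩ => hv F hF hvF)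
  refine ⟨w, le_antisymm ?_ (Finset.card_pos.2 ⟨F, Finset.mem_filter.2 ⟨hF, hwF⟩⟩)⟩
  refine le_trans (Finset.card_le_card fun G hG => ?_) (P.card_filter_mem_and_notMem_le_one hwu)
  obtain ⟨hGS, hwG⟩ := Finset.mem_filter.1 hG
  exact Finset.mem_filter.2 ⟨hS hGS, hwG, fun huG => hu ⟨G, hGS, huG⟩⟩

theorem linearIndependent_ind_facets_notMem (v : V) :
    LinearIndependent (ZMod 2) fun F : {F : Finset V // F ∈ P.facets ∧ v ∉ F} => ind F.1 := by
  rw [linearIndependent_zmod_two_iff]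
  intro s hs
  by_contra hne
  obtain ⟨w, hw⟩ := P.exists_card_filter_mem_eq_one (S := s.map (Function.Embedding.subtype _))
    (fun F hF => by obtain ⟨F, -, rfl⟩ := Finset.mem_map.1 hF; exact F.2.1)
    (Finset.map_nonempty.2 (Finset.nonempty_iff_ne_empty.2 hne))
    (fun F hF => by obtain ⟨F, -, rfl⟩ := Finset.mem_map.1 hF; exact F.2.2)
  have hsum := sum_ind_apply (s.map (Function.Embedding.subtype _)) w
  rw [Finset.sum_map, hw, ← Finset.sum_apply] at hsum
  simp only [Function.Embedding.coe_subtype, hs] at hsum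
  exact zero_ne_one hsum

theorem ind_notMem_span_ind_facets_notMem {v : V} {Fv : Finset V} (hvFv : v ∈ Fv) :
    ind Fv ∉ Submodule.span (ZMod 2)
      (Set.range fun F : {F : Finset V // F ∈ P.facets ∧ v ∉ F} => ind F.1) := by
  have hspan : Submodule.span (ZMod 2)
      (Set.range fun F : {F : Finset V // F ∈ P.facets ∧ v ∉ F} => ind F.1) ≤
      LinearMap.ker (LinearMap.proj v) := by
    rw [Submodule.span_le]
    rintro _ ⟨F, rfl⟩
    simp [ind, F.2.2]
  intro h
  simpa [ind, hvFv] using hspan h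

theorem card_facets_notMem (v : V) :
    Fintype.card {F : Finset V // F ∈ P.facets ∧ v ∉ F} = P.facets.card - n := by
  have hsplit := Finset.card_filter_add_card_filter_not (s := P.facets) (v ∈ ·)
  rw [P.vertex_facets_card v] at hsplit
  have hfilter : (Finset.univ.filter fun F => F ∈ P.facets ∧ v ∉ F) = P.facets.filter (v ∉ ·) := by
    ext; simp
  rw [Fintype.card_subtype, hfilter]
  omega

end SimplePolytope

/-- Let `P` be a simple `n`-polytope with `m` facets and `v` a vertex. Pick a facet
`F_v` containing `v`; then the indicator vectors of `F_v` and of all facets not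
containing `v` are linearly independent; in particular `dim 𝔅₁(P) ≥ m - n + 1`. -/
theorem facet_indicators_linearIndependent {n : ℕ} {V : Type*} [Fintype V]
    [DecidableEq V] (P : SimplePolytope n V) (v : V) (Fv : Finset V)
    (hFv : Fv ∈ P.facets) (hvFv : v ∈ Fv) :
    LinearIndependent (ZMod 2)
      (fun o : Option {F : Finset V // F ∈ P.facets ∧ v ∉ F} =>
        o.elim (SimplePolytope.ind Fv) (fun F => SimplePolytope.ind F.1)) ∧
    P.facets.card - n + 1 ≤ Module.finrank (ZMod 2) (P.faceCode 1) := by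
  have hli := (P.linearIndependent_ind_facets_notMem v).option
    (P.ind_notMem_span_ind_facets_notMem hvFv)
  simp only [Option.casesOn'_eq_elim] at hli
  refine ⟨hli, ?_⟩
  have hspan : Submodule.span (ZMod 2) (Set.range fun o : Option {F : Finset V //
      F ∈ P.facets ∧ v ∉ F} => o.elim (SimplePolytope.ind Fv) fun F => SimplePolytope.ind F.1)
      ≤ P.faceCode 1 :=
    Submodule.span_le.2 <| Set.range_subset_iff.2 fun o => o.rec (P.ind_mem_faceCode_one hFv)
      fun F => P.ind_mem_faceCode_one F.2.1
  calc P.facets.card - n + 1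
      = Fintype.card (Option {F : Finset V // F ∈ P.facets ∧ v ∉ F}) := by
        rw [Fintype.card_option, P.card_facets_notMem]
    _ = _ := (finrank_span_eq_card hli).symm
    _ ≤ _ := Submodule.finrank_mono hspan
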